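/- (i) If (Q,N) is a classical solution of the Q-system on [0,τ), then setting Ñ := 1/N, the pair (Q,Ñ) is a classical solution of the relaxed system on [0,τ). (ii) Conversely, if (Q,Ñ) is a classical solution of the relaxed system on [0,τ), the initial datum Q_init is nondecreasing on [0,1], and there exists 0 < τ* ≤ τ such that Ñ(s) > 0 for all s ∈ [0,τ*), then setting N := 1/Ñ, the pair (Q,N) is a classical solution of the Q-system on [0,τ*). -/

import Mathlib

open Real Set MeasureTheory Filter Topology
open scoped ENNReal

noncomputable section

/-- The time interval `[0, T)` in `ℝ`, where `T : ℝ≥0∞` may be `∞`. -/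
def Ico0 (T : ℝ≥0∞) : Set ℝ := {τ : ℝ | 0 ≤ τ ∧ ENNReal.ofReal τ < T}

/-- Partial derivative in the time variable (one-sided at `τ = 0`). -/
def pdTau (Q : ℝ → ℝ → ℝ) (τ η : ℝ) : ℝ := derivWithin (fun s => Q s η) (Ici 0) τ

/-- Partial derivative in the spatial variable (one-sided at `η = 0` and `η = 1`). -/
def pdEta (Q : ℝ → ℝ → ℝ) (τ η : ℝ) : ℝ := derivWithin (fun x => Q τ x) (Icc 0 1) η

/-- Assumption 1.1: `K ∈ C²(ℝ)` with `K'`, `K''` bounded on `ℝ` and `K > 0` on `[0, Φ_F]`. -/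
structure KAssump (K : ℝ → ℝ) (ΦF : ℝ) : Prop where
  smooth : ContDiff ℝ 2 K
  bdd1 : ∃ C : ℝ, ∀ x : ℝ, |deriv K x| ≤ C
  bdd2 : ∃ C : ℝ, ∀ x : ℝ, |deriv (deriv K) x| ≤ C
  pos : ∀ φ ∈ Icc (0 : ℝ) ΦF, 0 < K φ

/-- `k_min := K'(0) + ∫₀^{Φ_F} min(K''(φ), 0) dφ`. -/
def kmin (K : ℝ → ℝ) (ΦF : ℝ) : ℝ :=
  deriv K 0 + ∫ φ in (0 : ℝ)..ΦF, min (deriv (deriv K) φ) 0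

/-- `k_max := K'(0) + ∫₀^{Φ_F} max(K''(φ), 0) dφ`. -/
def kmax (K : ℝ → ℝ) (ΦF : ℝ) : ℝ :=
  deriv K 0 + ∫ φ in (0 : ℝ)..ΦF, max (deriv (deriv K) φ) 0

/-- Assumption (A2) on the initial datum. -/
structure A2 (K : ℝ → ℝ) (ΦF : ℝ) (Qinit : ℝ → ℝ) : Prop where
  reg : ContDiffOn ℝ 1 Qinit (Icc 0 1)
  mono : MonotoneOn Qinit (Icc 0 1)
  init0 : Qinit 0 = 0
  init1 : Qinit 1 = ΦF
  deriv1 : K ΦF < derivWithin Qinit (Icc 0 1) 1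
  compat : derivWithin Qinit (Icc 0 1) 1 - derivWithin Qinit (Icc 0 1) 0 = K ΦF - K 0

/-- A classical solution `(Q, N)` of the Q-system on `[0, T)` with initial datum `Qinit`. -/
structure IsQSol (K : ℝ → ℝ) (ΦF : ℝ) (T : ℝ≥0∞) (Qinit : ℝ → ℝ)
    (Q : ℝ → ℝ → ℝ) (N : ℝ → ℝ) : Prop where
  initReg : ContDiffOn ℝ 1 Qinit (Icc 0 1)
  initMono : MonotoneOn Qinit (Icc 0 1)
  init0 : Qinit 0 = 0
  init1 : Qinit 1 = ΦF
  initDeriv : K ΦF < derivWithin Qinit (Icc 0 1) 1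
  reg : ContDiffOn ℝ 1 (Function.uncurry Q) (Ico0 T ×ˢ Icc (0 : ℝ) 1)
  mono : ∀ τ ∈ Ico0 T, MonotoneOn (Q τ) (Icc 0 1)
  Ncont : ContinuousOn N (Ico0 T)
  Npos : ∀ τ ∈ Ico0 T, 0 < N τ
  pde : ∀ τ ∈ Ico0 T, ∀ η ∈ Ioo (0 : ℝ) 1,
    pdTau Q τ η + pdEta Q τ η = 1 / N τ + K (Q τ η)
  bc : ∀ τ ∈ Ico0 T, Q τ 0 = 0
  Ndef : ∀ τ ∈ Ico0 T, 1 / N τ = pdEta Q τ 1 - K ΦF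
  init : ∀ η ∈ Icc (0 : ℝ) 1, Q 0 η = Qinit η
  constraint : ∀ τ ∈ Ico0 T, K ΦF < pdEta Q τ 1

/-- A classical solution `(Q, Ñ)` of the relaxed system on `[0, T)` with initial datum `Qinit`,
where `Ñ` is unconstrained in sign. -/
structure IsRelaxedSol (K : ℝ → ℝ) (ΦF : ℝ) (T : ℝ≥0∞) (Qinit : ℝ → ℝ)
    (Q : ℝ → ℝ → ℝ) (Ntil : ℝ → ℝ) : Prop where
  initReg : ContDiffOn ℝ 1 Qinit (Icc 0 1)
  init0 : Qinit 0 = 0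
  init1 : Qinit 1 = ΦF
  reg : ContDiffOn ℝ 1 (Function.uncurry Q) (Ico0 T ×ˢ Icc (0 : ℝ) 1)
  Ncont : ContinuousOn Ntil (Ico0 T)
  pde : ∀ τ ∈ Ico0 T, ∀ η ∈ Ioo (0 : ℝ) 1,
    pdTau Q τ η + pdEta Q τ η = Ntil τ + K (Q τ η)
  bc : ∀ τ ∈ Ico0 T, Q τ 0 = 0
  Ndef : ∀ τ ∈ Ico0 T, Ntil τ = pdEta Q τ 1 - K ΦF
  init : ∀ η ∈ Icc (0 : ℝ) 1, Q 0 η = Qinit η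

/-- A steady state `(Q*, N*)` of the Q-system. -/
def IsSteadyState (K : ℝ → ℝ) (ΦF : ℝ) (Qs : ℝ → ℝ) (Ns : ℝ) : Prop :=
  ContDiffOn ℝ 1 Qs (Icc 0 1) ∧ 0 < Ns ∧
    (∀ η ∈ Icc (0 : ℝ) 1, derivWithin Qs (Icc 0 1) η = K (Qs η) + 1 / Ns) ∧
    Qs 0 = 0 ∧ Qs 1 = ΦF

/-- `P₀ f := f - ∫₀¹ f`. -/
def P0 (f : ℝ → ℝ) (η : ℝ) : ℝ := f η - ∫ x in (0 : ℝ)..1, f x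

/-- `H_init := Q_init' - K ∘ Q_init` (derivative within `[0,1]`). -/
def Hinit (K : ℝ → ℝ) (Qinit : ℝ → ℝ) (η : ℝ) : ℝ :=
  derivWithin Qinit (Icc 0 1) η - K (Qinit η)

/-!
Part (i) is bookkeeping, so is all of (ii) except that `Q τ` stays nondecreasing. Along a
characteristic `s ↦ Q s (s + c)` the PDE becomes the scalar ODE `y' = Ñ(s) + K(y)`, whose right-hand
side is Lipschitz in `y`. Two solutions of such an ODE cannot cross, since they would agree from the
crossing time on; so characteristics keep their order. Follow the characteristics through `(τ, η₁)`
and `(τ, η₂)`, `η₁ ≤ η₂`, back to the time at which the first one enters the domain: either both start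
on the initial line, where `Q_init` is nondecreasing, or the first one starts on the boundary
`η = 0`, where `Q = 0 ≤ Q`. The last inequality holds because a characteristic can only reach the
value `0` with slope `Ñ + K(0) > 0`.
-/

open scoped NNReal

lemma Ico0_mono {a b : ℝ≥0∞} (h : a ≤ b) : Ico0 a ⊆ Ico0 b :=
  fun _ hx => ⟨hx.1, hx.2.trans_le h⟩

lemma zero_mem_Ico0 {T : ℝ≥0∞} (hT : 0 < T) : (0 : ℝ) ∈ Ico0 T :=
  ⟨le_rfl, by simpa using hT⟩

lemma mem_Ico0_of_le {T : ℝ≥0∞} {a b : ℝ} (ha : 0 ≤ a) (hab : a ≤ b) (hb : b ∈ Ico0 T) :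
    a ∈ Ico0 T :=
  ⟨ha, (ENNReal.ofReal_le_ofReal hab).trans_lt hb.2⟩

lemma Ico0_eventuallyEq_Ici {T : ℝ≥0∞} {t : ℝ} (ht : t ∈ Ico0 T) :
    Ico0 T =ᶠ[𝓝 t] Ici (0 : ℝ) := by
  rw [eventuallyEq_set]
  filter_upwards [(isOpen_Iio.preimage ENNReal.continuous_ofReal).mem_nhds ht.2] with u hu
  exact ⟨fun h => h.1, fun h => ⟨h, hu⟩⟩

lemma uniqueDiffOn_Ico0 (T : ℝ≥0∞) : UniqueDiffOn ℝ (Ico0 T) := fun t ht =>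
  (uniqueDiffWithinAt_congr (nhdsWithin_eq_iff_eventuallyEq.2 (Ico0_eventuallyEq_Ici ht))).2
    (uniqueDiffOn_Ici 0 t ht.1)

lemma mapsTo_characteristic {T : ℝ≥0∞} {a b c : ℝ} (ha : 0 ≤ a) (hb : b ∈ Ico0 T)
    (hac : 0 ≤ a + c) (hbc : b + c ≤ 1) :
    MapsTo (fun t => (t, t + c)) (Icc a b) (Ico0 T ×ˢ Icc (0 : ℝ) 1) := by
  intro t ht
  exact ⟨mem_Ico0_of_le (ha.trans ht.1) ht.2 hb, by linarith [ht.1], by linarith [ht.2]⟩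

lemma exists_characteristic_start {τ η : ℝ} (hτ : 0 ≤ τ) (hη : 0 ≤ η) :
    ∃ a, 0 ≤ a ∧ a ≤ τ ∧ 0 ≤ a + (η - τ) ∧ (a = 0 ∨ a + (η - τ) = 0) := by
  rcases le_total τ η with h | h
  · exact ⟨0, le_rfl, hτ, by linarith, Or.inl rfl⟩
  · exact ⟨τ - η, by linarith, by linarith, by linarith, Or.inr (by ring)⟩

section PartialDerivatives

variable {T : ℝ≥0∞} {Q : ℝ → ℝ → ℝ}

lemma pdTau_eq_fderivWithin
    (hQ : DifferentiableOn ℝ (Function.uncurry Q) (Ico0 T ×ˢ Icc (0 : ℝ) 1))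
    {t η : ℝ} (ht : t ∈ Ico0 T) (hη : η ∈ Icc (0 : ℝ) 1) :
    pdTau Q t η = fderivWithin ℝ (Function.uncurry Q) (Ico0 T ×ˢ Icc 0 1) (t, η) (1, 0) := by
  have hγ : HasDerivWithinAt (fun s : ℝ => (s, η)) ((1 : ℝ), (0 : ℝ)) (Ico0 T) t :=
    ((hasDerivAt_id t).prodMk (hasDerivAt_const t η)).hasDerivWithinAt
  have h := (hQ (t, η) ⟨ht, hη⟩).hasFDerivWithinAt.comp_hasDerivWithinAt t hγ
    fun _ hs => mk_mem_prod hs hη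
  exact (h.congr_set (Ico0_eventuallyEq_Ici ht)).derivWithin (uniqueDiffOn_Ici 0 t ht.1)

lemma pdEta_eq_fderivWithin
    (hQ : DifferentiableOn ℝ (Function.uncurry Q) (Ico0 T ×ˢ Icc (0 : ℝ) 1))
    {t η : ℝ} (ht : t ∈ Ico0 T) (hη : η ∈ Icc (0 : ℝ) 1) :
    pdEta Q t η = fderivWithin ℝ (Function.uncurry Q) (Ico0 T ×ˢ Icc 0 1) (t, η) (0, 1) := by
  have hγ : HasDerivWithinAt (fun x : ℝ => (t, x)) ((0 : ℝ), (1 : ℝ)) (Icc 0 1) η :=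
    ((hasDerivAt_const η t).prodMk (hasDerivAt_id η)).hasDerivWithinAt
  exact ((hQ (t, η) ⟨ht, hη⟩).hasFDerivWithinAt.comp_hasDerivWithinAt η hγ
    fun _ hx => mk_mem_prod ht hx).derivWithin (uniqueDiffOn_Icc zero_lt_one η hη)

lemma pdTau_add_pdEta_eq_fderivWithin
    (hQ : DifferentiableOn ℝ (Function.uncurry Q) (Ico0 T ×ˢ Icc (0 : ℝ) 1))
    {t η : ℝ} (ht : t ∈ Ico0 T) (hη : η ∈ Icc (0 : ℝ) 1) :
    pdTau Q t η + pdEta Q t η =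
      fderivWithin ℝ (Function.uncurry Q) (Ico0 T ×ˢ Icc 0 1) (t, η) (1, 1) := by
  rw [pdTau_eq_fderivWithin hQ ht hη, pdEta_eq_fderivWithin hQ ht hη, ← map_add,
    Prod.mk_add_mk, add_zero, zero_add]

lemma continuousOn_pdTau_add_pdEta
    (hQ : ContDiffOn ℝ 1 (Function.uncurry Q) (Ico0 T ×ˢ Icc (0 : ℝ) 1)) :
    ContinuousOn (fun p : ℝ × ℝ => pdTau Q p.1 p.2 + pdEta Q p.1 p.2)
      (Ico0 T ×ˢ Icc (0 : ℝ) 1) := by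
  have hL := hQ.continuousOn_fderivWithin
    ((uniqueDiffOn_Ico0 T).prod (uniqueDiffOn_Icc zero_lt_one)) le_rfl
  refine ((ContinuousLinearMap.apply ℝ ℝ ((1 : ℝ), (1 : ℝ))).continuous.comp_continuousOn
    hL).congr ?_
  rintro ⟨t, η⟩ ⟨ht, hη⟩
  exact pdTau_add_pdEta_eq_fderivWithin (hQ.differentiableOn one_ne_zero) ht hη

lemma hasDerivWithinAt_characteristic_of_differentiableOn
    (hQ : DifferentiableOn ℝ (Function.uncurry Q) (Ico0 T ×ˢ Icc (0 : ℝ) 1))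
    {c t : ℝ} {s : Set ℝ} (hs : MapsTo (fun u => (u, u + c)) s (Ico0 T ×ˢ Icc (0 : ℝ) 1))
    (ht : t ∈ s) :
    HasDerivWithinAt (fun u => Q u (u + c)) (pdTau Q t (t + c) + pdEta Q t (t + c)) s t := by
  have hγ : HasDerivWithinAt (fun u : ℝ => (u, u + c)) ((1 : ℝ), (1 : ℝ)) s t :=
    ((hasDerivAt_id t).prodMk ((hasDerivAt_id t).add_const c)).hasDerivWithinAt
  rw [pdTau_add_pdEta_eq_fderivWithin hQ (hs ht).1 (hs ht).2]
  exact (hQ _ (hs ht)).hasFDerivWithinAt.comp_hasDerivWithinAt t hγ hs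

end PartialDerivatives

theorem ODE_solution_le_of_le {v : ℝ → ℝ → ℝ} {C : ℝ≥0} (hv : ∀ t, LipschitzWith C (v t))
    {f g : ℝ → ℝ} {a b : ℝ} (hab : a ≤ b)
    (hf : ContinuousOn f (Icc a b)) (hf' : ∀ t ∈ Ico a b, HasDerivWithinAt f (v t (f t)) (Ici t) t)
    (hg : ContinuousOn g (Icc a b)) (hg' : ∀ t ∈ Ico a b, HasDerivWithinAt g (v t (g t)) (Ici t) t)
    (ha : f a ≤ g a) : f b ≤ g b := by
  by_contra! hb
  obtain ⟨r, hr, hfgr⟩ : ∃ r ∈ Icc a b, g r - f r = 0 :=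
    intermediate_value_Icc' hab (hg.sub hf) ⟨by simpa using hb.le, by simpa using ha⟩
  have hfgb := ODE_solution_unique hv (hf.mono (Icc_subset_Icc_left hr.1))
    (fun t ht => hf' t ⟨hr.1.trans ht.1, ht.2⟩) (hg.mono (Icc_subset_Icc_left hr.1))
    (fun t ht => hg' t ⟨hr.1.trans ht.1, ht.2⟩) (by linarith) (right_mem_Icc.2 hr.2)
  exact hb.ne' hfgb

theorem nonneg_of_hasDerivWithinAt_pos_of_eq_zero {h h' : ℝ → ℝ} {a b : ℝ}
    (hh : ContinuousOn h (Icc a b)) (hh' : ∀ t ∈ Ico a b, HasDerivWithinAt h (h' t) (Ici t) t)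
    (ha : 0 ≤ h a) (hpos : ∀ t ∈ Ico a b, h t = 0 → 0 < h' t) :
    ∀ t ∈ Icc a b, 0 ≤ h t := fun _ ht =>
  neg_nonpos.1 <| image_le_of_deriv_right_lt_deriv_boundary' hh.neg (fun t ht => (hh' t ht).neg)
    (B := 0) (neg_nonpos.2 ha) continuousOn_const (fun _ _ => hasDerivWithinAt_const _ _ 0)
    (fun t ht h0 => neg_neg_iff_pos.2 (hpos t ht (neg_eq_zero.1 h0))) ht

lemma KAssump.exists_lipschitzWith {K : ℝ → ℝ} {ΦF : ℝ} (hK : KAssump K ΦF) :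
    ∃ C, LipschitzWith C K := by
  obtain ⟨C, hC⟩ := hK.bdd1
  refine ⟨C.toNNReal, lipschitzWith_of_nnnorm_deriv_le (hK.smooth.differentiable two_ne_zero)
    fun x => ?_⟩
  rw [← NNReal.coe_le_coe, coe_nnnorm, Real.coe_toNNReal', Real.norm_eq_abs]
  exact (hC x).trans (le_max_left _ _)

variable {K : ℝ → ℝ} {ΦF : ℝ} {T : ℝ≥0∞} {Qinit : ℝ → ℝ} {Q : ℝ → ℝ → ℝ}

lemma IsQSol.isRelaxedSol {N : ℝ → ℝ} (hQ : IsQSol K ΦF T Qinit Q N) :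
    IsRelaxedSol K ΦF T Qinit Q (fun s => 1 / N s) :=
  ⟨hQ.initReg, hQ.init0, hQ.init1, hQ.reg,
    continuousOn_const.div hQ.Ncont fun τ hτ => (hQ.Npos τ hτ).ne',
    hQ.pde, hQ.bc, hQ.Ndef, hQ.init⟩

namespace IsRelaxedSol

variable {Ntil : ℝ → ℝ} (R : IsRelaxedSol K ΦF T Qinit Q Ntil)
include R

lemma mono {T' : ℝ≥0∞} (h : T' ≤ T) : IsRelaxedSol K ΦF T' Qinit Q Ntil :=
  have hsub := Ico0_mono h
  ⟨R.initReg, R.init0, R.init1, R.reg.mono (prod_mono hsub subset_rfl), R.Ncont.mono hsub,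
    fun τ hτ => R.pde τ (hsub hτ), fun τ hτ => R.bc τ (hsub hτ),
    fun τ hτ => R.Ndef τ (hsub hτ), R.init⟩

lemma pde_Icc (hK : Continuous K) {τ : ℝ} (hτ : τ ∈ Ico0 T) {η : ℝ} (hη : η ∈ Icc (0 : ℝ) 1) :
    pdTau Q τ η + pdEta Q τ η = Ntil τ + K (Q τ η) := by
  have hslice : MapsTo (fun x : ℝ => (τ, x)) (Icc 0 1) (Ico0 T ×ˢ Icc (0 : ℝ) 1) :=
    fun x hx => ⟨hτ, hx⟩
  refine EqOn.of_subset_closure (f := fun η => pdTau Q τ η + pdEta Q τ η)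
    (fun x hx => R.pde τ hτ x hx) ?_ ?_ Ioo_subset_Icc_self
    (closure_Ioo zero_ne_one).ge hη
  · exact (continuousOn_pdTau_add_pdEta R.reg).comp (by fun_prop) hslice
  · exact continuousOn_const.add
      (hK.comp_continuousOn (R.reg.continuousOn.comp (by fun_prop) hslice))

lemma continuousOn_characteristic {a b c : ℝ} (ha : 0 ≤ a) (hb : b ∈ Ico0 T)
    (hac : 0 ≤ a + c) (hbc : b + c ≤ 1) :
    ContinuousOn (fun t => Q t (t + c)) (Icc a b) :=
  R.reg.continuousOn.comp (by fun_prop) (mapsTo_characteristic ha hb hac hbc)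

lemma hasDerivWithinAt_characteristic (hK : Continuous K) {a b c : ℝ} (ha : 0 ≤ a)
    (hb : b ∈ Ico0 T) (hac : 0 ≤ a + c) (hbc : b + c ≤ 1) :
    ∀ t ∈ Ico a b,
      HasDerivWithinAt (fun t => Q t (t + c)) (Ntil t + K (Q t (t + c))) (Ici t) t := by
  intro t ht
  have hmaps := mapsTo_characteristic ha hb hac hbc
  have htab : t ∈ Icc a b := Ico_subset_Icc_self ht
  rw [← R.pde_Icc hK (hmaps htab).1 (hmaps htab).2]
  exact (hasDerivWithinAt_characteristic_of_differentiableOn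
    (R.reg.differentiableOn one_ne_zero) hmaps htab).mono_of_mem_nhdsWithin
    (Icc_mem_nhdsGE_of_mem ht)

lemma nonneg (hK : Continuous K) (hK0 : 0 < K 0) (hinit : ∀ η ∈ Icc (0 : ℝ) 1, 0 ≤ Qinit η)
    (hN : ∀ s ∈ Ico0 T, 0 < Ntil s) {τ η : ℝ} (hτ : τ ∈ Ico0 T) (hη : η ∈ Icc (0 : ℝ) 1) :
    0 ≤ Q τ η := by
  obtain ⟨a, ha, haτ, hac, hstart⟩ := exists_characteristic_start hτ.1 hη.1
  have hτc : τ + (η - τ) ≤ 1 := by linarith [hη.2]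
  have hQa : 0 ≤ Q a (a + (η - τ)) := by
    rcases hstart with rfl | h0
    · have hητ : η - τ ∈ Icc (0 : ℝ) 1 := ⟨by linarith, by linarith [hτ.1]⟩
      rw [zero_add, R.init _ hητ]
      exact hinit _ hητ
    · rw [h0, R.bc a (mem_Ico0_of_le ha haτ hτ)]
  have h := nonneg_of_hasDerivWithinAt_pos_of_eq_zero (R.continuousOn_characteristic ha hτ hac hτc)
    (R.hasDerivWithinAt_characteristic hK ha hτ hac hτc) hQa
    (fun t ht h0 => by
      rw [h0]
      exact add_pos (hN t (mem_Ico0_of_le (ha.trans ht.1) ht.2.le hτ)) hK0)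
    τ (right_mem_Icc.2 haτ)
  simpa using h

lemma monotoneOn {C : ℝ≥0} (hK : LipschitzWith C K) (hK0 : 0 < K 0)
    (hinit : MonotoneOn Qinit (Icc 0 1)) (hN : ∀ s ∈ Ico0 T, 0 < Ntil s) {τ : ℝ}
    (hτ : τ ∈ Ico0 T) : MonotoneOn (Q τ) (Icc 0 1) := by
  intro η₁ hη₁ η₂ hη₂ h12
  obtain ⟨a, ha, haτ, hac₁, hstart⟩ := exists_characteristic_start hτ.1 hη₁.1
  have hac₂ : 0 ≤ a + (η₂ - τ) := by linarith
  have hτc₁ : τ + (η₁ - τ) ≤ 1 := by linarith [hη₁.2]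
  have hτc₂ : τ + (η₂ - τ) ≤ 1 := by linarith [hη₂.2]
  have hQa : Q a (a + (η₁ - τ)) ≤ Q a (a + (η₂ - τ)) := by
    rcases hstart with rfl | h0
    · have h₁ : η₁ - τ ∈ Icc (0 : ℝ) 1 := ⟨by linarith, by linarith [hτ.1]⟩
      have h₂ : η₂ - τ ∈ Icc (0 : ℝ) 1 := ⟨by linarith, by linarith [hτ.1]⟩
      rw [zero_add, zero_add, R.init _ h₁, R.init _ h₂]
      exact hinit h₁ h₂ (by linarith)
    · have haT := mem_Ico0_of_le ha haτ hτ
      have hinit_nonneg : ∀ η ∈ Icc (0 : ℝ) 1, 0 ≤ Qinit η := fun η hη =>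
        R.init0 ▸ hinit (left_mem_Icc.2 zero_le_one) hη hη.1
      rw [h0, R.bc a haT]
      exact R.nonneg hK.continuous hK0 hinit_nonneg hN haT ⟨hac₂, by linarith⟩
  have h := ODE_solution_le_of_le (v := fun t y => Ntil t + K y)
    (fun t => LipschitzWith.of_dist_le_mul fun x y => by
      simpa only [dist_add_left] using hK.dist_le_mul x y) haτ
    (R.continuousOn_characteristic ha hτ hac₁ hτc₁)
    (R.hasDerivWithinAt_characteristic hK.continuous ha hτ hac₁ hτc₁)
    (R.continuousOn_characteristic ha hτ hac₂ hτc₂)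
    (R.hasDerivWithinAt_characteristic hK.continuous ha hτ hac₂ hτc₂) hQa
  simpa using h

lemma isQSol {C : ℝ≥0} (hK : LipschitzWith C K) (hK0 : 0 < K 0)
    (hinit : MonotoneOn Qinit (Icc 0 1)) (hT : 0 < T) (hN : ∀ s ∈ Ico0 T, 0 < Ntil s) :
    IsQSol K ΦF T Qinit Q (fun s => 1 / Ntil s) where
  initReg := R.initReg
  initMono := hinit
  init0 := R.init0
  init1 := R.init1
  initDeriv := by
    have h0 := zero_mem_Ico0 hT
    have hN0 := hN 0 h0
    have hQ0 : pdEta Q 0 1 = derivWithin Qinit (Icc 0 1) 1 :=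
      derivWithin_congr (fun x hx => R.init x hx) (R.init 1 (right_mem_Icc.2 zero_le_one))
    rw [R.Ndef 0 h0, hQ0] at hN0
    linarith
  reg := R.reg
  mono _ hτ := R.monotoneOn hK hK0 hinit hN hτ
  Ncont := continuousOn_const.div R.Ncont fun s hs => (hN s hs).ne'
  Npos s hs := one_div_pos.2 (hN s hs)
  pde τ hτ η hη := by rw [one_div_one_div]; exact R.pde τ hτ η hη
  bc := R.bc
  Ndef τ hτ := by rw [one_div_one_div]; exact R.Ndef τ hτ
  init := R.init
  constraint τ hτ := by linarith [hN τ hτ, R.Ndef τ hτ]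

end IsRelaxedSol

/-- Lemma 3.9: the correspondence between classical solutions of the original Q-system and
of the relaxed system. -/
theorem stmt6 (ΦF : ℝ) (hΦF : 0 < ΦF) (K : ℝ → ℝ) (hK : KAssump K ΦF) :
    (∀ (T : ℝ≥0∞) (Qinit : ℝ → ℝ) (Q : ℝ → ℝ → ℝ) (N : ℝ → ℝ),
      IsQSol K ΦF T Qinit Q N →
        IsRelaxedSol K ΦF T Qinit Q (fun s => 1 / N s)) ∧
    (∀ (T τstar : ℝ≥0∞) (Qinit : ℝ → ℝ) (Q : ℝ → ℝ → ℝ) (Ntil : ℝ → ℝ),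
      IsRelaxedSol K ΦF T Qinit Q Ntil →
      MonotoneOn Qinit (Icc 0 1) →
      0 < τstar → τstar ≤ T →
      (∀ s ∈ Ico0 τstar, 0 < Ntil s) →
      IsQSol K ΦF τstar Qinit Q (fun s => 1 / Ntil s)) := by
  obtain ⟨C, hKlip⟩ := hK.exists_lipschitzWith
  have hK0 : 0 < K 0 := hK.pos 0 ⟨le_rfl, hΦF.le⟩
  refine ⟨fun T Qinit Q N hQ => hQ.isRelaxedSol, ?_⟩
  intro T τstar Qinit Q Ntil R hinit hτstar hle hN
  exact (R.mono hle).isQSol hKlip hK0 hinit hτstar hN
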